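/- arXiv:2505.07211 — 2 statements merged into one kernel-verified Lean document; each statement's English description precedes it below -/
import Mathlib

section
/- For every natural number n, the power X_1^n is a nonzero element of S_q(V). -/
noncomputable section

/-- The base field `K = ℂ(q)`, the field of rational functions over `ℂ`. -/
abbrev K : Type := RatFunc ℂ

/-- The indeterminate `q ∈ ℂ(q)`. -/
noncomputable def q : K := RatFunc.X

/-- The seven generators `X_a`, `a ∈ {1,2,3,0,-3,-2,-1}`, of `S_q(V)`. -/
inductive Gen : Type
  | p1 | p2 | p3 | z | m3 | m2 | m1
  deriving DecidableEq

open Gen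

/-- Generators of the free algebra. -/
noncomputable def x (a : Gen) : FreeAlgebra K Gen := FreeAlgebra.ι K a

/-- The 21 defining relations of the quantum symmetric algebra `S_q(V)`. -/
inductive SqRel : FreeAlgebra K Gen → FreeAlgebra K Gen → Prop
  | r1  : SqRel (x p2 * x p1) (q • (x p1 * x p2))
  | r2  : SqRel (x p3 * x p1) (q • (x p1 * x p3))
  | r3  : SqRel (x m3 * x p2) (q • (x p2 * x m3))
  | r4  : SqRel (x m1 * x m2) (q • (x m2 * x m1))
  | r5  : SqRel (x m1 * x m3) (q • (x m3 * x m1))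
  | r6  : SqRel (x m2 * x p3) (q • (x p3 * x m2))
  | r7  : SqRel (x z * x p1) (q ^ 2 • (x p1 * x z))
  | r8  : SqRel (x m1 * x z) (q ^ 2 • (x z * x m1))
  | r9  : SqRel (x m3 * x p1) (q ^ 3 • (x p1 * x m3))
  | r10 : SqRel (x m2 * x p1) (q ^ 3 • (x p1 * x m2))
  | r11 : SqRel (x m1 * x p3) (q ^ 3 • (x p3 * x m1))
  | r12 : SqRel (x m1 * x p2) (q ^ 3 • (x p2 * x m1))
  | r13 : SqRel (x p3 * x p2) (q ^ 3 • (x p2 * x p3) + (q ^ 2 - q ^ 4) • (x p1 * x z))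
  | r14 : SqRel (x m2 * x m3) (q ^ 3 • (x m3 * x m2) + (q - q ^ 5) • (x z * x m1))
  | r15 : SqRel (x z * x p2) (q ^ 2 • (x p2 * x z) + (q ^ 3 - q) • (x p1 * x m3))
  | r16 : SqRel (x m2 * x z) (q ^ 2 • (x z * x m2) + (q ^ 4 - 1) • (x p3 * x m1))
  | r17 : SqRel (x z * x p3) (q ^ 2 • (x p3 * x z) + (q - q ^ 3) • (x p1 * x m2))
  | r18 : SqRel (x m3 * x z) (q ^ 2 • (x z * x m3) + (1 - q ^ 4) • (x p2 * x m1))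
  | r19 : SqRel (x m1 * x p1) (q ^ 2 • (x p1 * x m1) + (q⁻¹ - q ^ 3) • (x p2 * x m2)
      + (q ^ (-4 : ℤ) - 1) • (x p3 * x m3)
      + (q ^ (-4 : ℤ) - q ^ (-2 : ℤ)) • (x z * x z + x p1 * x m1))
  | r20 : SqRel (x m2 * x p2) (x p2 * x m2 + (q ^ (-3 : ℤ) - q) • (x p3 * x m3)
      + (q ^ (-3 : ℤ) - q⁻¹) • (x z * x z + x p1 * x m1))
  | r21 : SqRel (x m3 * x p3) (x p3 * x m3 + (q ^ 3 - q) • (x p2 * x m2)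
      + (1 - q ^ 2) • (x z * x z + x p1 * x m1))

/-- The quantum symmetric algebra `S_q(V)`, presented by generators and relations. -/
abbrev SqV : Type := RingQuot SqRel

/-- The generators `X_a` of `S_q(V)`. -/
noncomputable def X (a : Gen) : SqV := RingQuot.mkAlgHom K SqRel (x a)

/-- The quadratic invariant `Φ ∈ S_q(V)`. -/
noncomputable def Phi : SqV :=
  q ^ 4 • (X p1 * X m1) + q ^ 3 • (X p2 * X m2) + X p3 * X m3
    + q ^ (-6 : ℤ) • (X m1 * X p1) + q ^ (-5 : ℤ) • (X m2 * X p2)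
    + q ^ (-2 : ℤ) • (X m3 * X p3) + X z * X z


/-- Auxiliary evaluation sending `X p1 ↦ 1` and all other generators to `0`. -/
noncomputable def fgen : Gen → K := fun a => if a = p1 then 1 else 0


set_option maxHeartbeats 1000000 in
set_option synthInstance.maxHeartbeats 400000 in
lemma fgen_rel : ∀ ⦃a b : FreeAlgebra K Gen⦄, SqRel a b →
    FreeAlgebra.lift K fgen a = FreeAlgebra.lift K fgen b := by
  intro a b h
  cases h <;>
    simp [x, fgen, FreeAlgebra.lift_ι_apply, map_add, map_mul, map_smul, smul_eq_mul]


noncomputable def ev : SqV →ₐ[K] K :=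
  RingQuot.liftAlgHom K ⟨FreeAlgebra.lift K fgen, fgen_rel⟩


lemma ev_X_p1 : ev (X p1) = 1 := by
  simp [ev, X, x, RingQuot.liftAlgHom_mkAlgHom_apply, FreeAlgebra.lift_ι_apply, fgen]

/-- for every natural number `n`, the power `X_1ⁿ` is nonzero in `S_q(V)`. -/
theorem X1_pow_ne_zero : ∀ n : ℕ, (X p1) ^ n ≠ 0 := by
  intro n h
  have : ev ((X p1) ^ n) = 0 := by rw [h, map_zero]
  rw [map_pow, ev_X_p1, one_pow] at this
  exact one_ne_zero this

end
end

section
/- The bilinear form ( , ) on V is non-degenerate and U_q(G_2)-invariant; concretely, for i = 1, 2 and all v, w in V: (pi(E_i) v, pi(K_i) w) + (v, pi(E_i) w) = 0; (pi(F_i) v, w) + (pi(K_i)^{-1} v, pi(F_i) w) = 0; and (pi(K_i) v, pi(K_i) w) = (v, w). -/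
set_option synthInstance.maxHeartbeats 400000
set_option maxHeartbeats 1000000

noncomputable section

open scoped TensorProduct BigOperators

/-- Index set `{1,2,3,0,-3,-2,-1}` for the basis of the 7-dimensional module `V`. -/
inductive Idx : Type
  | p1 | p2 | p3 | z | m3 | m2 | m1
  deriving DecidableEq

instance : Fintype Idx :=
  ⟨{Idx.p1, Idx.p2, Idx.p3, Idx.z, Idx.m3, Idx.m2, Idx.m1}, fun x => by cases x <;> simp⟩

open Idx

/-- The standard 7-dimensional module `V = K⁷`. -/
abbrev V : Type := Idx → K

/-- The basis vectors `v_a` of `V`. -/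
noncomputable def v (a : Idx) : V := Pi.single a 1

/-- Matrix units `E_{ab}` with `E_{ab} v_c = δ_{bc} v_a`. -/
noncomputable def Emat (a b : Idx) : Matrix Idx Idx K := Matrix.single a b 1

/-- The operator `π(E₁)` on `V`. -/
noncomputable def piE1 : Module.End K V :=
  Matrix.toLin' (Emat p1 p2 + (q + q⁻¹) • Emat p3 z - (q + q⁻¹) • Emat z m3 - Emat m2 m1)

/-- The operator `π(E₂)` on `V`. -/
noncomputable def piE2 : Module.End K V := Matrix.toLin' (Emat p2 p3 - Emat m3 m2)

/-- The operator `π(F₁)` on `V`. -/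
noncomputable def piF1 : Module.End K V :=
  Matrix.toLin' (Emat p2 p1 + Emat z p3 - Emat m3 z - Emat m1 m2)

/-- The operator `π(F₂)` on `V`. -/
noncomputable def piF2 : Module.End K V := Matrix.toLin' (Emat p3 p2 - Emat m2 m3)

/-- The operator `π(K₁)` on `V`. -/
noncomputable def piK1 : Module.End K V :=
  Matrix.toLin' (q • Emat p1 p1 + q⁻¹ • Emat p2 p2 + q ^ 2 • Emat p3 p3 + Emat z z
    + q ^ (-2 : ℤ) • Emat m3 m3 + q • Emat m2 m2 + q⁻¹ • Emat m1 m1)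

/-- The inverse operator `π(K₁)⁻¹` on `V`. -/
noncomputable def piK1inv : Module.End K V :=
  Matrix.toLin' (q⁻¹ • Emat p1 p1 + q • Emat p2 p2 + q ^ (-2 : ℤ) • Emat p3 p3 + Emat z z
    + q ^ 2 • Emat m3 m3 + q⁻¹ • Emat m2 m2 + q • Emat m1 m1)

/-- The operator `π(K₂)` on `V`. -/
noncomputable def piK2 : Module.End K V :=
  Matrix.toLin' (Emat p1 p1 + q ^ 3 • Emat p2 p2 + q ^ (-3 : ℤ) • Emat p3 p3 + Emat z z
    + q ^ 3 • Emat m3 m3 + q ^ (-3 : ℤ) • Emat m2 m2 + Emat m1 m1)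

/-- The inverse operator `π(K₂)⁻¹` on `V`. -/
noncomputable def piK2inv : Module.End K V :=
  Matrix.toLin' (Emat p1 p1 + q ^ (-3 : ℤ) • Emat p2 p2 + q ^ 3 • Emat p3 p3 + Emat z z
    + q ^ (-3 : ℤ) • Emat m3 m3 + q ^ 3 • Emat m2 m2 + Emat m1 m1)

/-- The coefficient table `φ_{ab} = (v_a, v_b)` of the invariant bilinear form on `V`. -/
noncomputable def phi : Idx → Idx → K
  | p1, m1 => q ^ 6
  | p2, m2 => q ^ 5
  | p3, m3 => q ^ 2
  | z, z => 1
  | m1, p1 => q ^ (-4 : ℤ)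
  | m2, p2 => q ^ (-3 : ℤ)
  | m3, p3 => 1
  | _, _ => 0

/-- The bilinear form `( , )` on `V`, with `(v_a, v_b) = φ_{ab}`. -/
noncomputable def B (u w : V) : K := ∑ a : Idx, ∑ b : Idx, u a * w b * phi a b

/-!
In the basis `v_a` the form has Gram matrix `Φ = (φ_ab)`, and `φ_ab ≠ 0` exactly when `b = -a`.
So `Φ` is a permuted diagonal matrix with nonzero diagonal, hence has nonzero determinant, which
gives nondegeneracy. An identity `(X u, Y w) + (X' u, Y' w) = 0` for all `u, w` is the matrix
identity `Xᵀ Φ Y + X'ᵀ Φ Y' = 0`, which is checked entry by entry.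
-/

open Matrix

theorem Matrix.nondegenerate_of_monomial {ι R : Type*} [Fintype ι] [DecidableEq ι] [CommRing R]
    [IsDomain R] {M : Matrix ι ι R} (σ : Equiv.Perm ι) (h_off : ∀ a b, b ≠ σ a → M a b = 0)
    (h_on : ∀ a, M a (σ a) ≠ 0) : M.Nondegenerate := by
  have hM : M = (diagonal fun b => M (σ.symm b) b).submatrix σ id := by
    ext a b
    by_cases hb : b = σ a
    · simp [hb]
    · simp [h_off a b hb, Ne.symm hb]
  apply nondegenerate_of_det_ne_zero
  rw [hM, det_permute, det_diagonal]
  refine mul_ne_zero ?_ (Finset.prod_ne_zero_iff.mpr fun b _ => by simpa using h_on (σ.symm b))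
  exact ((Equiv.Perm.sign σ).isUnit.map (Int.castRingHom R)).ne_zero

lemma q_ne_zero : q ≠ 0 := RatFunc.X_ne_zero

def Idx.neg : Idx → Idx
  | p1 => m1 | p2 => m2 | p3 => m3 | z => z | m3 => p3 | m2 => p2 | m1 => p1

lemma Idx.neg_involutive : Function.Involutive Idx.neg := by
  intro a; cases a <;> rfl

lemma phi_eq_zero_of_ne_neg (a b : Idx) (h : b ≠ a.neg) : phi a b = 0 := by
  cases a <;> cases b <;> first | rfl | exact absurd rfl h

lemma phi_neg_ne_zero (a : Idx) : phi a a.neg ≠ 0 := by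
  cases a <;> simp [Idx.neg, phi, q_ne_zero]

lemma nondegenerate_phi : (of phi).Nondegenerate :=
  nondegenerate_of_monomial (Idx.neg_involutive.toPerm _) phi_eq_zero_of_ne_neg phi_neg_ne_zero

lemma B_eq_dotProduct (u w : V) : B u w = u ⬝ᵥ of phi *ᵥ w := by
  simp only [B, dotProduct, mulVec, of_apply, Finset.mul_sum]
  exact Finset.sum_congr rfl fun a _ => Finset.sum_congr rfl fun b _ => by ring

/-- The Gram matrix of the form `(u, w) ↦ (f u, g w)`. -/
def gramComp (f g : Module.End K V) : Matrix Idx Idx K :=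
  (LinearMap.toMatrix' f)ᵀ * of phi * LinearMap.toMatrix' g

lemma B_apply_apply (f g : Module.End K V) (u w : V) :
    B (f u) (g w) = u ⬝ᵥ gramComp f g *ᵥ w := by
  rw [B_eq_dotProduct, gramComp, ← mulVec_mulVec, ← mulVec_mulVec, dotProduct_mulVec u,
    vecMul_transpose, LinearMap.toMatrix'_mulVec, LinearMap.toMatrix'_mulVec]

lemma B_add_B_eq_zero_of_gramComp {f g f' g' : Module.End K V}
    (h : gramComp f g + gramComp f' g' = 0) (u w : V) : B (f u) (g w) + B (f' u) (g' w) = 0 := by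
  rw [B_apply_apply, B_apply_apply, ← dotProduct_add, ← add_mulVec, h, zero_mulVec,
    dotProduct_zero]

lemma B_apply_apply_eq_of_gramComp {f g : Module.End K V} (h : gramComp f g = of phi)
    (u w : V) : B (f u) (g w) = B u w := by
  rw [B_apply_apply, h, B_eq_dotProduct]

lemma gramComp_piE1_piK1_add_gramComp_one_piE1 : gramComp piE1 piK1 + gramComp 1 piE1 = 0 := by
  simp only [gramComp, piE1, piK1, LinearMap.toMatrix'_toLin', LinearMap.toMatrix'_one]
  ext a b
  cases a <;> cases b <;> simp [mul_apply, Emat, single_apply, phi] <;>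
    field_simp [q_ne_zero] <;> ring

lemma gramComp_piE2_piK2_add_gramComp_one_piE2 : gramComp piE2 piK2 + gramComp 1 piE2 = 0 := by
  simp only [gramComp, piE2, piK2, LinearMap.toMatrix'_toLin', LinearMap.toMatrix'_one]
  ext a b
  cases a <;> cases b <;> simp [mul_apply, Emat, single_apply, phi]
  field_simp [q_ne_zero]
  ring

lemma gramComp_piF1_one_add_gramComp_piK1inv_piF1 : gramComp piF1 1 + gramComp piK1inv piF1 = 0 := by
  simp only [gramComp, piF1, piK1inv, LinearMap.toMatrix'_toLin', LinearMap.toMatrix'_one]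
  ext a b
  cases a <;> cases b <;> simp [mul_apply, Emat, single_apply, phi] <;>
    field_simp [q_ne_zero] <;> ring

lemma gramComp_piF2_one_add_gramComp_piK2inv_piF2 : gramComp piF2 1 + gramComp piK2inv piF2 = 0 := by
  simp only [gramComp, piF2, piK2inv, LinearMap.toMatrix'_toLin', LinearMap.toMatrix'_one]
  ext a b
  cases a <;> cases b <;> simp [mul_apply, Emat, single_apply, phi]
  field_simp [q_ne_zero]
  ring

lemma gramComp_piK1_piK1 : gramComp piK1 piK1 = of phi := by
  simp only [gramComp, piK1, LinearMap.toMatrix'_toLin']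
  ext a b
  cases a <;> cases b <;> simp [mul_apply, Emat, single_apply, phi] <;>
    field_simp [q_ne_zero]

lemma gramComp_piK2_piK2 : gramComp piK2 piK2 = of phi := by
  simp only [gramComp, piK2, LinearMap.toMatrix'_toLin']
  ext a b
  cases a <;> cases b <;> simp [mul_apply, Emat, single_apply, phi] <;>
    field_simp [q_ne_zero]

/-- the bilinear form `( , )` on `V` is non-degenerate and
`U_q(G₂)`-invariant. -/
theorem bilinear_form_nondegenerate_and_invariant :
    (∀ u : V, (∀ w : V, B u w = 0) → u = 0) ∧
    (∀ u : V, (∀ w : V, B w u = 0) → u = 0) ∧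
    (∀ u w : V, B (piE1 u) (piK1 w) + B u (piE1 w) = 0) ∧
    (∀ u w : V, B (piE2 u) (piK2 w) + B u (piE2 w) = 0) ∧
    (∀ u w : V, B (piF1 u) w + B (piK1inv u) (piF1 w) = 0) ∧
    (∀ u w : V, B (piF2 u) w + B (piK2inv u) (piF2 w) = 0) ∧
    (∀ u w : V, B (piK1 u) (piK1 w) = B u w) ∧
    (∀ u w : V, B (piK2 u) (piK2 w) = B u w) :=
  ⟨fun u hu => nondegenerate_phi.eq_zero_of_ortho fun w => B_eq_dotProduct u w ▸ hu w,
    fun u hu => nondegenerate_phi.eq_zero_of_ortho' fun w => B_eq_dotProduct w u ▸ hu w,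
    B_add_B_eq_zero_of_gramComp gramComp_piE1_piK1_add_gramComp_one_piE1,
    B_add_B_eq_zero_of_gramComp gramComp_piE2_piK2_add_gramComp_one_piE2,
    B_add_B_eq_zero_of_gramComp gramComp_piF1_one_add_gramComp_piK1inv_piF1,
    B_add_B_eq_zero_of_gramComp gramComp_piF2_one_add_gramComp_piK2inv_piF2,
    B_apply_apply_eq_of_gramComp gramComp_piK1_piK1,
    B_apply_apply_eq_of_gramComp gramComp_piK2_piK2⟩

end
end
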